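/- Let q be a power of 2 and m ≥ 2 an integer with gcd(q-1, m(m-1)) = 1, and let λ be a partition of m such that S_{λ,F_q} is nonempty. Then D_{λ,F_q} = F_q^×, and for any two elements δ_1, δ_2 ∈ F_q^×, the number of polynomials in S_{λ,F_q} with discriminant δ_1 equals the number with discriminant δ_2. -/

import Mathlib

open Polynomial
open scoped Classical

/-- The discriminant of a polynomial `f` of degree `m ≥ 2` over a field `F`, computed in an
algebraic closure via the standard formula
`disc(f) = (-1)^(m(m-1)/2) · a_m^(m-2) · ∏_i f'(α_i)`, where `a_m` is the leading coefficient
and the `α_i` are the roots of `f` (with multiplicity) in the algebraic closure; this equals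
`a_m^(2m-2) · ∏_{i<j} (α_i - α_j)^2`.  For `f` of degree at most 1 it is defined to be `1`. -/
noncomputable def polyDisc {F : Type*} [Field F] (f : F[X]) : AlgebraicClosure F :=
  if f.natDegree ≤ 1 then 1
  else
    (-1) ^ (f.natDegree * (f.natDegree - 1) / 2) *
      algebraMap F (AlgebraicClosure F) f.leadingCoeff ^ (f.natDegree - 2) *
      (Multiset.map (fun a => ((derivative f).map (algebraMap F (AlgebraicClosure F))).eval a)
        (f.map (algebraMap F (AlgebraicClosure F))).roots).prod

/-- The Möbius function on polynomials over a field: `μ f = (-1)^k` if `f` is squarefree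
with `k` (distinct) monic irreducible factors, and `μ f = 0` otherwise. -/
noncomputable def polyMu {F : Type*} [Field F] (f : F[X]) : ℤ :=
  if Squarefree f then (-1) ^ {π : F[X] | π.Monic ∧ Irreducible π ∧ π ∣ f}.ncard else 0

/-- `f` has factorization type `λ` (a partition of `m`): `f` is a product of distinct monic
irreducible polynomials whose degrees form the multiset of parts of `λ`.  The set
`S_{λ,F}` of monic squarefree polynomials of factorization type `λ` is
`{f | hasFactorizationType f λ}`. -/
def hasFactorizationType {F : Type*} [Field F] (f : F[X]) {m : ℕ} (lam : m.Partition) : Prop :=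
  ∃ s : Finset F[X], (∀ π ∈ s, π.Monic ∧ Irreducible π) ∧ (∏ π ∈ s, π) = f ∧
    Multiset.map natDegree s.val = lam.parts

/-!
Scaling the roots, `f(X) ↦ c ^ m f(X / c)`, preserves the factorization type and multiplies the
discriminant by `c ^ (m (m - 1))`. Since `gcd(q - 1, m (m - 1)) = 1`, the map `c ↦ c ^ (m (m - 1))`
permutes `F_qˣ`, so a suitable scaling carries the polynomials of discriminant `δ₁` bijectively onto
those of discriminant `δ₂`. The discriminant of a separable polynomial is a nonzero element of
`F_q` (it is Mathlib's `Polynomial.discr`), so one nonempty fibre makes them all nonempty.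
-/

namespace Polynomial

noncomputable def scaleRootsMulEquiv {R : Type*} [CommSemiring R] [NoZeroDivisors R] (r : Rˣ) :
    R[X] ≃* R[X] where
  toFun p := p.scaleRoots r
  invFun p := p.scaleRoots ↑r⁻¹
  left_inv p := by simp only [← scaleRoots_mul, Units.mul_inv, scaleRoots_one]
  right_inv p := by simp only [← scaleRoots_mul, Units.inv_mul, scaleRoots_one]
  map_mul' p q := mul_scaleRoots_of_noZeroDivisors p q r

lemma scaleRoots_comp_C_mul_X {R : Type*} [CommSemiring R] (p : R[X]) (c : R) :
    (p.scaleRoots c).comp (C c * X) = C (c ^ p.natDegree) * p := by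
  ext n
  rw [comp_C_mul_X_coeff, coeff_scaleRoots, coeff_C_mul]
  rcases le_or_gt n p.natDegree with hn | hn
  · rw [mul_assoc, ← pow_add, Nat.sub_add_cancel hn, mul_comm]
  · simp [coeff_eq_zero_of_natDegree_lt hn]

lemma mul_eval_mul_derivative_scaleRoots {R : Type*} [CommSemiring R] (p : R[X]) (c a : R) :
    c * (derivative (p.scaleRoots c)).eval (c * a) = c ^ p.natDegree * (derivative p).eval a := by
  have h := congrArg (fun q => (derivative q).eval a) (scaleRoots_comp_C_mul_X p c)
  simpa only [derivative_comp, derivative_C_mul, eval_mul, eval_C, eval_comp,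
    eval_X, derivative_X, eval_one, mul_one] using h

end Polynomial

lemma exists_pow_eq_of_coprime_card_sub_one {F : Type*} [Field F] [Fintype F] {N : ℕ}
    (hN : (Fintype.card F - 1).Coprime N) {d : F} (hd : d ≠ 0) : ∃ c : F, c ≠ 0 ∧ c ^ N = d := by
  have hcop : (Nat.card Fˣ).Coprime N := by
    rwa [Nat.card_units, Nat.card_eq_fintype_card]
  obtain ⟨u, hu⟩ := (powCoprime hcop).surjective (Units.mk0 d hd)
  exact ⟨u, u.ne_zero, by simpa [powCoprime_apply] using congrArg Units.val hu⟩

namespace hasFactorizationType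

variable {F : Type*} [Field F] {f : F[X]} {m : ℕ} {lam : m.Partition}

lemma natDegree_eq (hf : hasFactorizationType f lam) : f.natDegree = m := by
  obtain ⟨s, hs, rfl, hdeg⟩ := hf
  rw [natDegree_prod _ _ fun π hπ => (hs π hπ).1.ne_zero, ← lam.parts_sum, ← hdeg]
  rfl

lemma separable [PerfectField F] (hf : hasFactorizationType f lam) : f.Separable := by
  obtain ⟨s, hs, rfl, -⟩ := hf
  refine separable_prod' (fun π hπ ρ hρ hne => ?_)
    fun π hπ => PerfectField.separable_of_irreducible (hs π hπ).2
  refine (hs π hπ).2.coprime_iff_not_dvd.mpr fun hdvd => hne ?_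
  exact eq_of_monic_of_associated (hs π hπ).1 (hs ρ hρ).1
    ((hs π hπ).2.associated_of_dvd (hs ρ hρ).2 hdvd)

lemma scaleRoots (hf : hasFactorizationType f lam) {c : F} (hc : c ≠ 0) :
    hasFactorizationType (f.scaleRoots c) lam := by
  obtain ⟨s, hs, rfl, hdeg⟩ := hf
  set e := scaleRootsMulEquiv (Units.mk0 c hc)
  have he : ∀ p, e p = p.scaleRoots c := fun _ => rfl
  refine ⟨s.map e.toEquiv.toEmbedding, fun π hπ => ?_, ?_, ?_⟩
  · obtain ⟨ρ, hρ, rfl⟩ := Finset.mem_map.mp hπ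
    exact ⟨(monic_scaleRoots_iff c).mpr (hs ρ hρ).1, (MulEquiv.irreducible_iff e).mpr (hs ρ hρ).2⟩
  · rw [Finset.prod_map, ← he, map_prod]
    rfl
  · rw [Finset.map_val, Multiset.map_map, ← hdeg]
    exact Multiset.map_congr rfl fun ρ _ => natDegree_scaleRoots ρ c

end hasFactorizationType

section polyDisc

variable {F : Type*} [Field F] {f : F[X]}

local notation "φ" => algebraMap F (AlgebraicClosure F)

lemma polyDisc_of_two_le_natDegree (hf : 2 ≤ f.natDegree) :
    polyDisc f = (-1) ^ (f.natDegree * (f.natDegree - 1) / 2) *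
      φ f.leadingCoeff ^ (f.natDegree - 2) *
      ((f.map φ).roots.map (derivative (f.map φ)).eval).prod := by
  rw [polyDisc, if_neg (by omega), derivative_map]

lemma polyDisc_eq_algebraMap_discr (hf : 2 ≤ f.natDegree) : polyDisc f = φ f.discr := by
  obtain ⟨j, hj⟩ : ∃ j, f.natDegree = j + 2 := ⟨_, (Nat.sub_add_cancel hf).symm⟩
  have hlc : φ f.leadingCoeff ≠ 0 := by
    simpa using ne_zero_of_natDegree_gt (n := 0) (by omega)
  -- `Res(f, f') = (-1) ^ (n (n - 1) / 2) · lc(f) · discr f = lc(f) ^ (n - 1) · ∏ f'(α)`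
  have hprod := resultant_eq_prod_eval (f.map φ) (derivative (f.map φ)) (f.natDegree - 1)
    ((natDegree_derivative_le _).trans_eq (by rw [natDegree_map])) (IsAlgClosed.splits _)
  rw [natDegree_map, leadingCoeff_map] at hprod
  have hres := congrArg φ (resultant_deriv (f := f) (natDegree_pos_iff_degree_pos.mp (by omega)))
  rw [← resultant_map_map, ← derivative_map, hprod, hj] at hres
  have hsign : ((-1 : AlgebraicClosure F) ^ ((j + 2) * (j + 1) / 2)) ^ 2 = 1 := by
    rw [← pow_mul, mul_comm, pow_mul, neg_one_sq, one_pow]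
  rw [polyDisc_of_two_le_natDegree hf, hj]
  refine mul_left_cancel₀ hlc ?_
  simp only [map_mul, map_pow, map_neg, map_one, Nat.add_sub_cancel,
    show j + 2 - 1 = j + 1 by omega] at hres ⊢
  linear_combination (-1 : AlgebraicClosure F) ^ ((j + 2) * (j + 1) / 2) * hres +
    φ f.leadingCoeff * φ f.discr * hsign

lemma polyDisc_ne_zero (hsep : f.Separable) (hf : 2 ≤ f.natDegree) : polyDisc f ≠ 0 := by
  have hlc : φ f.leadingCoeff ≠ 0 := by
    simpa using ne_zero_of_natDegree_gt (n := 0) (by omega)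
  rw [polyDisc_of_two_le_natDegree hf]
  refine mul_ne_zero (mul_ne_zero (pow_ne_zero _ (by norm_num)) (pow_ne_zero _ hlc))
    (Multiset.prod_ne_zero fun h0 => ?_)
  obtain ⟨a, ha, h⟩ := Multiset.mem_map.mp h0
  exact hsep.map.eval₂_derivative_ne_zero (RingHom.id _) (isRoot_of_mem_roots ha) h

lemma polyDisc_scaleRoots (hf : 2 ≤ f.natDegree) {c : F} (hc : c ≠ 0) :
    polyDisc (f.scaleRoots c) = φ c ^ (f.natDegree * (f.natDegree - 1)) * polyDisc f := by
  have hcK : φ c ≠ 0 := by simpa using hc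
  have hmap : (f.scaleRoots c).map φ = (f.map φ).scaleRoots (φ c) :=
    map_scaleRoots f c φ (by simpa using ne_zero_of_natDegree_gt (n := 0) (by omega))
  have hcard : Multiset.card (f.map φ).roots = f.natDegree := by
    rw [← natDegree_map (p := f) φ, (IsAlgClosed.splits _).natDegree_eq_card_roots]
  have heval : ∀ a, (derivative ((f.map φ).scaleRoots (φ c))).eval (φ c * a) =
      φ c ^ (f.natDegree - 1) * (derivative (f.map φ)).eval a := fun a =>
    mul_left_cancel₀ hcK (by rw [mul_eval_mul_derivative_scaleRoots, natDegree_map, ← mul_assoc,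
      ← pow_succ', Nat.sub_add_cancel (by omega)])
  rw [polyDisc_of_two_le_natDegree (by rwa [natDegree_scaleRoots]),
    polyDisc_of_two_le_natDegree hf, natDegree_scaleRoots, leadingCoeff_scaleRoots, hmap,
    roots_scaleRoots _ hcK.isUnit, Multiset.map_map]
  simp only [Function.comp_def, heval, Multiset.prod_map_mul, Multiset.map_const',
    Multiset.prod_replicate, hcard]
  ring

end polyDisc

lemma image_scaleRoots_polyDisc_fiber {F : Type*} [Field F] {m : ℕ} (lam : m.Partition)
    (hm : 2 ≤ m) {c : F} (hc : c ≠ 0) (δ : F) :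
    (·.scaleRoots c) ''
        {f : F[X] | hasFactorizationType f lam ∧ polyDisc f = algebraMap F _ δ} =
      {f : F[X] | hasFactorizationType f lam ∧
        polyDisc f = algebraMap F _ (c ^ (m * (m - 1)) * δ)} := by
  refine Set.eq_of_subset_of_subset ?_ fun g ⟨hg, hgδ⟩ => ?_
  · rintro _ ⟨f, ⟨hf, hfδ⟩, rfl⟩
    refine ⟨hf.scaleRoots hc, ?_⟩
    rw [polyDisc_scaleRoots (hm.trans_eq hf.natDegree_eq.symm) hc, hf.natDegree_eq, hfδ, map_mul,
      map_pow]
  · refine ⟨g.scaleRoots c⁻¹, ⟨hg.scaleRoots (inv_ne_zero hc), ?_⟩, ?_⟩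
    · rw [polyDisc_scaleRoots (hm.trans_eq hg.natDegree_eq.symm) (inv_ne_zero hc),
        hg.natDegree_eq, hgδ, ← map_pow, ← map_mul, inv_pow,
        inv_mul_cancel_left₀ (pow_ne_zero _ hc)]
    · simp only [← scaleRoots_mul, inv_mul_cancel₀ hc, scaleRoots_one]

theorem stmt14_general {F : Type*} [Field F] [Fintype F] (q m : ℕ) (hq : Fintype.card F = q)
    (hm : 2 ≤ m) (hgcd : Nat.gcd (q - 1) (m * (m - 1)) = 1)
    (lam : m.Partition) (hne : ∃ f : F[X], hasFactorizationType f lam) :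
    {d : F | ∃ f : F[X], hasFactorizationType f lam ∧
        polyDisc f = algebraMap F (AlgebraicClosure F) d} = {d : F | d ≠ 0} ∧
    ∀ δ₁ δ₂ : F, δ₁ ≠ 0 → δ₂ ≠ 0 →
      {f : F[X] | hasFactorizationType f lam ∧
          polyDisc f = algebraMap F (AlgebraicClosure F) δ₁}.ncard =
      {f : F[X] | hasFactorizationType f lam ∧
          polyDisc f = algebraMap F (AlgebraicClosure F) δ₂}.ncard := by
  have hN : (Fintype.card F - 1).Coprime (m * (m - 1)) := by rwa [hq]
  refine ⟨Set.eq_of_subset_of_subset ?_ fun d hd => ?_, fun δ₁ δ₂ h₁ h₂ => ?_⟩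
  · rintro d ⟨f, hf, hfd⟩ rfl
    exact polyDisc_ne_zero hf.separable (hm.trans_eq hf.natDegree_eq.symm) (by rw [hfd, map_zero])
  · obtain ⟨f, hf⟩ := hne
    have hfdeg := hm.trans_eq hf.natDegree_eq.symm
    have hdiscr : f.discr ≠ 0 := fun h => polyDisc_ne_zero hf.separable hfdeg
      (by rw [polyDisc_eq_algebraMap_discr hfdeg, h, map_zero])
    obtain ⟨c, hc, hcd⟩ := exists_pow_eq_of_coprime_card_sub_one hN (div_ne_zero hd hdiscr)
    refine ⟨f.scaleRoots c, hf.scaleRoots hc, ?_⟩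
    rw [polyDisc_scaleRoots hfdeg hc, polyDisc_eq_algebraMap_discr hfdeg, hf.natDegree_eq,
      ← map_pow, ← map_mul, hcd, div_mul_cancel₀ _ hdiscr]
  · obtain ⟨c, hc, hcd⟩ := exists_pow_eq_of_coprime_card_sub_one hN (div_ne_zero h₂ h₁)
    rw [← div_mul_cancel₀ δ₂ h₁, ← hcd, ← image_scaleRoots_polyDisc_fiber lam hm hc]
    exact (Set.ncard_image_of_injective _ (scaleRootsMulEquiv (Units.mk0 c hc)).injective).symm

/-- If `q` is a power of `2`, `gcd(q-1, m(m-1)) = 1`, and `λ` is a partition of `m ≥ 2` such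
that `S_{λ,F_q}` is nonempty, then `D_{λ,F_q} = F_q^×` and any two elements of `F_q^×` are
discriminants of equally many polynomials in `S_{λ,F_q}`. -/
theorem stmt14 {F : Type*} [Field F] [Fintype F] (q m : ℕ) (hq : Fintype.card F = q)
    (h2 : ∃ n : ℕ, q = 2 ^ n) (hm : 2 ≤ m) (hgcd : Nat.gcd (q - 1) (m * (m - 1)) = 1)
    (lam : m.Partition) (hne : ∃ f : F[X], hasFactorizationType f lam) :
    {d : F | ∃ f : F[X], hasFactorizationType f lam ∧
        polyDisc f = algebraMap F (AlgebraicClosure F) d} = {d : F | d ≠ 0} ∧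
    ∀ δ₁ δ₂ : F, δ₁ ≠ 0 → δ₂ ≠ 0 →
      {f : F[X] | hasFactorizationType f lam ∧
          polyDisc f = algebraMap F (AlgebraicClosure F) δ₁}.ncard =
      {f : F[X] | hasFactorizationType f lam ∧
          polyDisc f = algebraMap F (AlgebraicClosure F) δ₂}.ncard :=
  stmt14_general q m hq hm hgcd lam hne
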